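/- Let D ⊆ ℂ be an open disc, let a : D → ℂ be smooth (as a function of the underlying real variables), let m ≥ 1, and define u : D×ℂ → ℝ by u(z₁,z₂) := 2 Re(a(z₁) z₂^{m+1}). If u is plurisubharmonic on D×ℂ (i.e., its complex Hessian (∂²u/∂w_j∂w̄_k)_{j,k=1,2} is positive semidefinite at every point), then ∂_{z̄₁}a ≡ 0 on D, i.e., a is holomorphic on D. -/

import Mathlib

open Complex Metric Set Filter Topology

noncomputable section

/-- One-variable Wirtinger derivative ∂/∂z̄. -/
def w1bar (f : ℂ → ℂ) (z : ℂ) : ℂ :=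
  (fderiv ℝ f z 1 + Complex.I * fderiv ℝ f z Complex.I) / 2

/-- Complex coordinate directions in ℂ². -/
def e2 : Fin 2 → ℂ → ℂ × ℂ := ![fun c => (c, 0), fun c => (0, c)]

/-- Wirtinger derivative ∂/∂w_j on ℂ². -/
def wd2 (j : Fin 2) (f : ℂ × ℂ → ℂ) (z : ℂ × ℂ) : ℂ :=
  (fderiv ℝ f z (e2 j 1) - Complex.I * fderiv ℝ f z (e2 j Complex.I)) / 2

/-- Wirtinger derivative ∂/∂w̄_j on ℂ². -/
def wd2bar (j : Fin 2) (f : ℂ × ℂ → ℂ) (z : ℂ × ℂ) : ℂ :=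
  (fderiv ℝ f z (e2 j 1) + Complex.I * fderiv ℝ f z (e2 j Complex.I)) / 2

/-!
Write u = F + F̄ with F(z₁, z₂) = a(z₁) z₂^(m+1), which is holomorphic in z₂. Then
∂u/∂z̄₂ = conj(∂F/∂z₂) is antiholomorphic in z₂, so ∂²u/∂z₂∂z̄₂ = 0, while at (z, 1) the mixed
entries are (m+1) conj(∂a/∂z̄(z)) and (m+1) ∂a/∂z̄(z). A positive semidefinite form with a
vanishing diagonal entry has vanishing off-diagonal entries: on vectors (t, s) with t real it is
a real quadratic A t² + B t, which is nonnegative only if B = 0.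
-/

open ComplexConjugate ContinuousLinearMap

/-- Wirtinger derivative ∂/∂z. -/
def w1d (f : ℂ → ℂ) (z : ℂ) : ℂ :=
  (fderiv ℝ f z 1 - Complex.I * fderiv ℝ f z Complex.I) / 2

@[simp] lemma e2_zero_apply (c : ℂ) : e2 0 c = (c, 0) := rfl

@[simp] lemma e2_one_apply (c : ℂ) : e2 1 c = (0, c) := rfl

lemma Filter.EventuallyEq.wd2_eq {f g : ℂ × ℂ → ℂ} {p : ℂ × ℂ} (h : f =ᶠ[𝓝 p] g) (j : Fin 2) :
    wd2 j f p = wd2 j g p := by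
  rw [wd2, wd2, h.fderiv_eq]

lemma fderiv_conj_apply (f : ℂ × ℂ → ℂ) (p v : ℂ × ℂ) :
    fderiv ℝ (fun q => conj (f q)) p v = conj (fderiv ℝ f p v) :=
  congrArg (fun L : ℂ × ℂ →L[ℝ] ℂ => L v) (conjCLE.comp_fderiv (f := f))

lemma wd2_conj (f : ℂ × ℂ → ℂ) (p : ℂ × ℂ) (j : Fin 2) :
    wd2 j (fun q => conj (f q)) p = conj (wd2bar j f p) := by
  simp only [wd2, wd2bar, fderiv_conj_apply, map_div₀, map_add, map_mul, conj_I, map_ofNat]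
  ring

lemma wd2_add_conj {f g : ℂ × ℂ → ℂ} {p : ℂ × ℂ} (hf : DifferentiableAt ℝ f p)
    (hg : DifferentiableAt ℝ g p) (j : Fin 2) :
    wd2 j (fun q => f q + conj (g q)) p = wd2 j f p + conj (wd2bar j g p) := by
  have hg' : DifferentiableAt ℝ (fun q => conj (g q)) p := hg.star
  simp only [wd2, wd2bar, fderiv_fun_add hf hg', add_apply, fderiv_conj_apply, map_div₀, map_add,
    map_mul, conj_I, map_ofNat]
  ring

lemma wd2bar_add_conj {f g : ℂ × ℂ → ℂ} {p : ℂ × ℂ} (hf : DifferentiableAt ℝ f p)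
    (hg : DifferentiableAt ℝ g p) (j : Fin 2) :
    wd2bar j (fun q => f q + conj (g q)) p = wd2bar j f p + conj (wd2 j g p) := by
  have hg' : DifferentiableAt ℝ (fun q => conj (g q)) p := hg.star
  simp only [wd2, wd2bar, fderiv_fun_add hf hg', add_apply, fderiv_conj_apply, map_div₀, map_sub,
    map_mul, conj_I, map_ofNat]
  ring

lemma wd2bar_two_mul_re {F : ℂ × ℂ → ℂ} {p : ℂ × ℂ} (hF : DifferentiableAt ℝ F p)
    (j : Fin 2) :
    wd2bar j (fun q => 2 * ((F q).re : ℂ)) p = wd2bar j F p + conj (wd2 j F p) := by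
  have hsplit : (fun q => 2 * ((F q).re : ℂ)) = fun q => F q + conj (F q) := by
    funext q
    rw [add_conj]
    push_cast
    rfl
  rw [hsplit, wd2bar_add_conj hF hF]

section SeparatedProduct

variable {g h : ℂ → ℂ} {h' : ℂ} {p : ℂ × ℂ}

lemma hasFDerivAt_mul_comp_snd (hg : DifferentiableAt ℝ g p.1) (hh : HasDerivAt h h' p.2) :
    HasFDerivAt (fun q : ℂ × ℂ => g q.1 * h q.2)
      (g p.1 • (h' • snd ℝ ℂ ℂ) + h p.2 • (fderiv ℝ g p.1).comp (fst ℝ ℂ ℂ)) p := by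
  have hh₂ : HasFDerivAt (fun q : ℂ × ℂ => h q.2) (h' • snd ℝ ℂ ℂ) p := by
    refine ((hh.hasFDerivAt.restrictScalars ℝ).comp p hasFDerivAt_snd).congr_fderiv ?_
    ext <;> simp [mul_comm]
  exact (hg.hasFDerivAt.comp p hasFDerivAt_fst).mul hh₂

lemma fderiv_mul_comp_snd_apply (hg : DifferentiableAt ℝ g p.1) (hh : HasDerivAt h h' p.2)
    (v : ℂ × ℂ) :
    fderiv ℝ (fun q : ℂ × ℂ => g q.1 * h q.2) p v =
      g p.1 * (h' * v.2) + h p.2 * fderiv ℝ g p.1 v.1 := by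
  simp [(hasFDerivAt_mul_comp_snd hg hh).fderiv]

lemma wd2_zero_mul_comp_snd (hg : DifferentiableAt ℝ g p.1) (hh : HasDerivAt h h' p.2) :
    wd2 0 (fun q : ℂ × ℂ => g q.1 * h q.2) p = w1d g p.1 * h p.2 := by
  simp only [wd2, e2_zero_apply, fderiv_mul_comp_snd_apply hg hh, w1d]
  ring

lemma wd2bar_zero_mul_comp_snd (hg : DifferentiableAt ℝ g p.1) (hh : HasDerivAt h h' p.2) :
    wd2bar 0 (fun q : ℂ × ℂ => g q.1 * h q.2) p = w1bar g p.1 * h p.2 := by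
  simp only [wd2bar, e2_zero_apply, fderiv_mul_comp_snd_apply hg hh, w1bar]
  ring

lemma wd2_one_mul_comp_snd (hg : DifferentiableAt ℝ g p.1) (hh : HasDerivAt h h' p.2) :
    wd2 1 (fun q : ℂ × ℂ => g q.1 * h q.2) p = g p.1 * h' := by
  simp only [wd2, e2_one_apply, fderiv_mul_comp_snd_apply hg hh, map_zero, mul_zero, add_zero]
  linear_combination (-(g p.1 * h') / 2) * I_sq

lemma wd2bar_one_mul_comp_snd (hg : DifferentiableAt ℝ g p.1) (hh : HasDerivAt h h' p.2) :
    wd2bar 1 (fun q : ℂ × ℂ => g q.1 * h q.2) p = 0 := by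
  simp only [wd2bar, e2_one_apply, fderiv_mul_comp_snd_apply hg hh, map_zero, mul_zero, add_zero]
  linear_combination (g p.1 * h' / 2) * I_sq

end SeparatedProduct

lemma linear_coeff_eq_zero_of_forall_nonneg {A B : ℝ} (h : ∀ t : ℝ, 0 ≤ A * (t * t) + B * t) :
    B = 0 := by
  have := discrim_le_zero (K := ℝ) (c := 0) (by simpa using h)
  rw [discrim] at this
  nlinarith [sq_nonneg B]

lemma add_conj_eq_zero_of_forall_re_nonneg (H : Fin 2 → Fin 2 → ℂ) (h11 : H 1 1 = 0)
    (hH : ∀ v : Fin 2 → ℂ, 0 ≤ (∑ j, ∑ k, H j k * v j * conj (v k)).re) :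
    H 0 1 + conj (H 1 0) = 0 := by
  have hlin : ∀ s : ℂ, (H 0 1 * conj s + H 1 0 * s).re = 0 := fun s =>
    linear_coeff_eq_zero_of_forall_nonneg (A := (H 0 0).re) fun t => by
      have := hH ![(t : ℂ), s]
      simp only [Fin.sum_univ_two, Matrix.cons_val_zero, Matrix.cons_val_one,
        Matrix.cons_val_fin_one, h11, conj_ofReal, zero_mul, add_zero] at this
      convert this using 1
      simp only [add_re, mul_re, mul_im, ofReal_re, ofReal_im, conj_re, conj_im]
      ring
  have h1 := hlin 1
  have hI := hlin I
  simp only [map_one, mul_one, add_re, conj_I, mul_neg, neg_re, mul_re, I_re, I_im, mul_zero,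
    zero_sub, neg_neg] at h1 hI
  apply Complex.ext <;> simp <;> linarith

section SmoothCoefficient

variable {a : ℂ → ℂ} {z : ℂ}

lemma ContDiffAt.differentiableAt_fderiv (ha : ContDiffAt ℝ 2 a z) :
    DifferentiableAt ℝ (fderiv ℝ a) z :=
  (ha.fderiv_right (m := 1) (by norm_num)).differentiableAt one_ne_zero

lemma ContDiffAt.differentiableAt_w1bar (ha : ContDiffAt ℝ 2 a z) :
    DifferentiableAt ℝ (w1bar a) z := by
  have := ha.differentiableAt_fderiv
  unfold w1bar
  fun_prop

lemma ContDiffAt.differentiableAt_w1d (ha : ContDiffAt ℝ 2 a z) :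
    DifferentiableAt ℝ (w1d a) z := by
  have := ha.differentiableAt_fderiv
  unfold w1d
  fun_prop

end SmoothCoefficient

def twoReMulPow (a : ℂ → ℂ) (m : ℕ) : ℂ × ℂ → ℂ :=
  fun q => (2 * ((a q.1 * q.2 ^ (m + 1)).re : ℝ) : ℂ)

section TwoReMulPow

variable {a : ℂ → ℂ} {m : ℕ} {q : ℂ × ℂ}

lemma hasDerivAt_pow_succ (m : ℕ) (w : ℂ) :
    HasDerivAt (fun w : ℂ => w ^ (m + 1)) ((m + 1) * w ^ m) w := by
  simpa using hasDerivAt_pow (m + 1) w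

lemma wd2bar_zero_twoReMulPow (ha : DifferentiableAt ℝ a q.1) :
    wd2bar 0 (twoReMulPow a m) q =
      w1bar a q.1 * q.2 ^ (m + 1) + conj (w1d a q.1 * q.2 ^ (m + 1)) := by
  have hpow := hasDerivAt_pow_succ m q.2
  unfold twoReMulPow
  rw [wd2bar_two_mul_re (hasFDerivAt_mul_comp_snd ha hpow).differentiableAt,
    wd2bar_zero_mul_comp_snd ha hpow, wd2_zero_mul_comp_snd ha hpow]

lemma wd2bar_one_twoReMulPow (ha : DifferentiableAt ℝ a q.1) :
    wd2bar 1 (twoReMulPow a m) q = conj (a q.1 * ((m + 1) * q.2 ^ m)) := by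
  have hpow := hasDerivAt_pow_succ m q.2
  unfold twoReMulPow
  rw [wd2bar_two_mul_re (hasFDerivAt_mul_comp_snd ha hpow).differentiableAt,
    wd2bar_one_mul_comp_snd ha hpow, wd2_one_mul_comp_snd ha hpow, zero_add]

lemma ContDiffAt.eventually_differentiableAt_fst (ha : ContDiffAt ℝ 2 a q.1) :
    ∀ᶠ q' in 𝓝 q, DifferentiableAt ℝ a q'.1 :=
  continuous_fst.continuousAt.eventually
    ((ha.eventually (by simp)).mono fun _ hw => hw.differentiableAt (by norm_num))

lemma wd2bar_one_twoReMulPow_eventuallyEq (ha : ContDiffAt ℝ 2 a q.1) :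
    wd2bar 1 (twoReMulPow a m) =ᶠ[𝓝 q] fun q' => conj (a q'.1 * ((m + 1) * q'.2 ^ m)) := by
  filter_upwards [ha.eventually_differentiableAt_fst] with q' hq'
  exact wd2bar_one_twoReMulPow hq'

lemma wd2_zero_wd2bar_one_twoReMulPow (ha : ContDiffAt ℝ 2 a q.1) :
    wd2 0 (wd2bar 1 (twoReMulPow a m)) q = conj (w1bar a q.1 * ((m + 1) * q.2 ^ m)) := by
  rw [(wd2bar_one_twoReMulPow_eventuallyEq ha).wd2_eq, wd2_conj,
    wd2bar_zero_mul_comp_snd (h := fun w : ℂ => (m + 1) * w ^ m)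
      (ha.differentiableAt (by norm_num)) ((hasDerivAt_pow m q.2).const_mul _)]

lemma wd2_one_wd2bar_one_twoReMulPow (ha : ContDiffAt ℝ 2 a q.1) :
    wd2 1 (wd2bar 1 (twoReMulPow a m)) q = 0 := by
  rw [(wd2bar_one_twoReMulPow_eventuallyEq ha).wd2_eq, wd2_conj,
    wd2bar_one_mul_comp_snd (h := fun w : ℂ => (m + 1) * w ^ m)
      (ha.differentiableAt (by norm_num)) ((hasDerivAt_pow m q.2).const_mul _), map_zero]

lemma wd2_one_wd2bar_zero_twoReMulPow (ha : ContDiffAt ℝ 2 a q.1) :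
    wd2 1 (wd2bar 0 (twoReMulPow a m)) q = w1bar a q.1 * ((m + 1) * q.2 ^ m) := by
  have hwd2bar : wd2bar 0 (twoReMulPow a m) =ᶠ[𝓝 q]
      fun q' => w1bar a q'.1 * q'.2 ^ (m + 1) + conj (w1d a q'.1 * q'.2 ^ (m + 1)) := by
    filter_upwards [ha.eventually_differentiableAt_fst] with q' hq'
    exact wd2bar_zero_twoReMulPow hq'
  have hpow := hasDerivAt_pow_succ m q.2
  have hbar := hasFDerivAt_mul_comp_snd ha.differentiableAt_w1bar hpow
  have hd := hasFDerivAt_mul_comp_snd ha.differentiableAt_w1d hpow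
  rw [hwd2bar.wd2_eq, wd2_add_conj hbar.differentiableAt hd.differentiableAt,
    wd2_one_mul_comp_snd ha.differentiableAt_w1bar hpow,
    wd2bar_one_mul_comp_snd ha.differentiableAt_w1d hpow, map_zero, add_zero]

end TwoReMulPow

theorem statement_5_general (c : ℂ) (r : ℝ) (a : ℂ → ℂ)
    (ha : ContDiffOn ℝ (⊤ : ℕ∞) a (Metric.ball c r)) (m : ℕ)
    (hpsh : ∀ p : ℂ × ℂ, p.1 ∈ Metric.ball c r → ∀ v : Fin 2 → ℂ,
      0 ≤ (∑ j, ∑ k,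
        wd2 j (wd2bar k (fun q : ℂ × ℂ => (2 * ((a q.1 * q.2 ^ (m + 1)).re : ℝ) : ℂ)))
          p * v j * (starRingEnd ℂ) (v k)).re) :
    ∀ z ∈ Metric.ball c r, w1bar a z = 0 := by
  intro z hz
  set p : ℂ × ℂ := (z, 1)
  have hsmooth : ContDiffAt ℝ 2 a p.1 :=
    (ha.contDiffAt (isOpen_ball.mem_nhds hz)).of_le (by norm_cast)
  have hoff := add_conj_eq_zero_of_forall_re_nonneg
    (fun j k => wd2 j (wd2bar k (twoReMulPow a m)) p)
    (wd2_one_wd2bar_one_twoReMulPow hsmooth) (hpsh p hz)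
  simp only [wd2_zero_wd2bar_one_twoReMulPow hsmooth,
    wd2_one_wd2bar_zero_twoReMulPow hsmooth] at hoff
  simpa [p, ← two_mul, Nat.cast_add_one_ne_zero] using hoff

/-- if u(z₁,z₂) = 2 Re(a(z₁) z₂^{m+1}) is plurisubharmonic on
D × ℂ (D an open disc, a smooth), then a is holomorphic on D. -/
theorem statement_5 (c : ℂ) (r : ℝ) (hr : 0 < r) (a : ℂ → ℂ)
    (ha : ContDiffOn ℝ (⊤ : ℕ∞) a (Metric.ball c r)) (m : ℕ) (hm : 1 ≤ m)
    (hpsh : ∀ p : ℂ × ℂ, p.1 ∈ Metric.ball c r → ∀ v : Fin 2 → ℂ,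
      0 ≤ (∑ j, ∑ k,
        wd2 j (wd2bar k (fun q : ℂ × ℂ => (2 * ((a q.1 * q.2 ^ (m + 1)).re : ℝ) : ℂ)))
          p * v j * (starRingEnd ℂ) (v k)).re) :
    ∀ z ∈ Metric.ball c r, w1bar a z = 0 :=
  statement_5_general c r a ha m hpsh

end
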